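/- Let Π = Π₁ *_K Π₂ be an amalgamated free product of finitely generated groups over a finitely generated subgroup K. If χ: Π → ℝ is a character with [χ|_{Π₁}] ∈ Σ¹(Π₁), [χ|_{Π₂}] ∈ Σ¹(Π₂), and χ|_K ≠ 0, then [χ] ∈ Σ¹(Π). -/

import Mathlib

/-!
Fix finite generating sets `S₁`, `S₂` of the factors and let `T` be the union of their images in
`Π`. Membership in `Σ¹` does not depend on the finite generating set: a path for `T` becomes a
path for any other finite generating set `S` after replacing each `T`-edge by an `S`-word, which
costs a bounded amount `D` of height, and one first climbs above `D` along an `S`-generator of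
positive character. So it suffices to join every `g` with `χ g ≥ 0` to `1` in the `T`-graph
above `0`.

Pick `z ∈ K` with `χ z > 0`. Write `g = b a` with `a` in a factor `Πᵢ`. The coset `b Πᵢ`
carries a translated copy of the Cayley graph of `Πᵢ`, connected above the height of any of its
points by `[χ|_{Πᵢ}] ∈ Σ¹(Πᵢ)`; inside it, walk from `b a` to `b zᵐ` with `m` large. Since
`z` lies in both factors, `zᵐ` is absorbed into the last letter of `b`, and induction on the
length of `g` as a word in the factors finishes the argument.
-/

/-- `χ : G → ℝ` is an (additive) character. -/
def IsChar {G : Type*} [Group G] (χ : G → ℝ) : Prop :=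
  ∀ a b : G, χ (a * b) = χ a + χ b

/-- `[χ]` lies in the Bieri–Neumann–Strebel invariant `Σ¹(G)`: `χ` is a nonzero
character and, for every finite generating set `S` of `G`, the full subgraph of the
Cayley graph `Γ(G,S)` on the vertices `{g : 0 ≤ χ g}` is connected. -/
def InSigma1 {G : Type*} [Group G] (χ : G → ℝ) : Prop :=
  IsChar χ ∧ χ ≠ (fun _ => 0) ∧
    ∀ S : Finset G, Subgroup.closure (S : Set G) = ⊤ →
      ∀ x y : G, 0 ≤ χ x → 0 ≤ χ y →
        Relation.ReflTransGen
          (fun a b => 0 ≤ χ a ∧ 0 ≤ χ b ∧ ∃ s ∈ S, b = a * s ∨ a = b * s) x y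
/-- The amalgamated free product `Π₁ *_K Π₂` along `j₁ : K → Π₁`, `j₂ : K → Π₂`:
the quotient of the free product `Π₁ ∗ Π₂` by the normal closure of the elements
`j₁(k) j₂(k)⁻¹`. -/
def Amal {K P₁ P₂ : Type*} [Group K] [Group P₁] [Group P₂]
    (j₁ : K →* P₁) (j₂ : K →* P₂) : Type _ :=
  (Monoid.Coprod P₁ P₂) ⧸ Subgroup.normalClosure
    {x | ∃ k : K, x = Monoid.Coprod.inl (j₁ k) * (Monoid.Coprod.inr (j₂ k))⁻¹}

instance {K P₁ P₂ : Type*} [Group K] [Group P₁] [Group P₂]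
    (j₁ : K →* P₁) (j₂ : K →* P₂) : Group (Amal j₁ j₂) :=
  QuotientGroup.Quotient.group _

/-- The canonical map `Π₁ → Π₁ *_K Π₂`. -/
def amalInl {K P₁ P₂ : Type*} [Group K] [Group P₁] [Group P₂]
    (j₁ : K →* P₁) (j₂ : K →* P₂) : P₁ →* Amal j₁ j₂ :=
  (QuotientGroup.mk' _).comp Monoid.Coprod.inl

/-- The canonical map `Π₂ → Π₁ *_K Π₂`. -/
def amalInr {K P₁ P₂ : Type*} [Group K] [Group P₁] [Group P₂]
    (j₁ : K →* P₁) (j₂ : K →* P₂) : P₂ →* Amal j₁ j₂ :=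
  (QuotientGroup.mk' _).comp Monoid.Coprod.inr

open Relation Subgroup

namespace IsChar

variable {G : Type*} [Group G] {χ : G → ℝ}

theorem map_one (hχ : IsChar χ) : χ 1 = 0 := by
  have := hχ 1 1
  rw [mul_one] at this
  linarith

theorem map_inv (hχ : IsChar χ) (g : G) : χ g⁻¹ = -χ g := by
  have := hχ g g⁻¹
  rw [mul_inv_cancel, hχ.map_one] at this
  linarith

theorem map_pow (hχ : IsChar χ) (g : G) (n : ℕ) : χ (g ^ n) = n * χ g := by
  induction n with
  | zero => simp [hχ.map_one]
  | succ n ih => rw [pow_succ, hχ, ih]; push_cast; ring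

theorem exists_pow_ge (hχ : IsChar χ) {z : G} (hz : 0 < χ z) (R : ℝ) :
    ∃ n : ℕ, R ≤ χ (z ^ n) := by
  obtain ⟨n, hn⟩ := Archimedean.arch R hz
  exact ⟨n, by rwa [hχ.map_pow, ← nsmul_eq_mul]⟩

theorem exists_mem_pos (hχ : IsChar χ) {H : Subgroup G} (h : ∃ g ∈ H, χ g ≠ 0) :
    ∃ g ∈ H, 0 < χ g := by
  obtain ⟨g, hg, hne⟩ := h
  rcases hne.lt_or_gt with hneg | hpos
  · exact ⟨g⁻¹, H.inv_mem hg, by rw [hχ.map_inv]; linarith⟩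
  · exact ⟨g, hg, hpos⟩

theorem exists_mem_ne_zero (hχ : IsChar χ) {S : Set G} (hS : closure S = ⊤)
    (hχ0 : χ ≠ fun _ => 0) : ∃ s ∈ S, χ s ≠ 0 := by
  by_contra! h
  refine hχ0 (funext fun g => ?_)
  induction (hS ▸ mem_top g : g ∈ closure S) using closure_induction with
  | mem s hs => exact h s hs
  | one => exact hχ.map_one
  | mul a b _ _ ha hb => rw [hχ, ha, hb, add_zero]
  | inv a _ ha => rw [hχ.map_inv, ha, neg_zero]

end IsChar

namespace Sigma1

variable {G H : Type*} [Group G] [Group H] {χ : G → ℝ}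

/-- Adjacency in the full subgraph of the Cayley graph `Γ(G, U)` on `{g : c ≤ χ g}`. -/
def AdjAbove (χ : G → ℝ) (U : Set G) (c : ℝ) (a b : G) : Prop :=
  c ≤ χ a ∧ c ≤ χ b ∧ ∃ s ∈ U, b = a * s ∨ a = b * s

def JoinedAbove (χ : G → ℝ) (U : Set G) (c : ℝ) : G → G → Prop :=
  ReflTransGen (AdjAbove χ U c)

theorem inSigma1_iff : InSigma1 χ ↔ IsChar χ ∧ χ ≠ (fun _ => 0) ∧
    ∀ S : Finset G, closure (S : Set G) = ⊤ →
      ∀ x y : G, 0 ≤ χ x → 0 ≤ χ y → JoinedAbove χ S 0 x y :=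
  Iff.rfl

namespace JoinedAbove

variable {U V : Set G} {c c' : ℝ} {x y z : G}

theorem trans (hxy : JoinedAbove χ U c x y) (hyz : JoinedAbove χ U c y z) :
    JoinedAbove χ U c x z :=
  ReflTransGen.trans hxy hyz

theorem symm (h : JoinedAbove χ U c x y) : JoinedAbove χ U c y x :=
  have : Std.Symm (AdjAbove χ U c) :=
    ⟨fun _ _ ⟨ha, hb, s, hs, hab⟩ => ⟨hb, ha, s, hs, hab.symm⟩⟩
  ReflTransGen.stdSymm.symm _ _ h

theorem mono_level (hc : c' ≤ c) (h : JoinedAbove χ U c x y) : JoinedAbove χ U c' x y :=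
  ReflTransGen.mono (fun _ _ ⟨ha, hb, hab⟩ => ⟨hc.trans ha, hc.trans hb, hab⟩) _ _ h

theorem mono_set (hUV : U ⊆ V) (h : JoinedAbove χ U c x y) : JoinedAbove χ V c x y :=
  ReflTransGen.mono (fun _ _ ⟨ha, hb, s, hs, hab⟩ => ⟨ha, hb, s, hUV hs, hab⟩) _ _ h

theorem mul_left (hχ : IsChar χ) (g : G) (h : JoinedAbove χ U c x y) :
    JoinedAbove χ U (χ g + c) (g * x) (g * y) := by
  refine ReflTransGen.lift (g * ·) (fun a b ⟨ha, hb, s, hs, hab⟩ => ⟨?_, ?_, s, hs, ?_⟩) _ _ h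
  · rw [hχ]; linarith
  · rw [hχ]; linarith
  · rcases hab with rfl | rfl
    exacts [.inl (mul_assoc _ _ _).symm, .inr (mul_assoc _ _ _).symm]

theorem map {χ : G → ℝ} (f : H →* G) {U : Set H} {x y : H}
    (h : JoinedAbove (χ ∘ f) U c x y) : JoinedAbove χ (f '' U) c (f x) (f y) := by
  refine ReflTransGen.lift f (fun a b ⟨ha, hb, s, hs, hab⟩ =>
    ⟨ha, hb, f s, Set.mem_image_of_mem f hs, ?_⟩) _ _ h
  rcases hab with rfl | rfl
  exacts [.inl (map_mul f _ _), .inr (map_mul f _ _)]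

/-- Replacing each `T`-edge by an `S`-path that dips at most `D` below its start. -/
theorem of_forall_joinedAbove_mul {S T : Set G} {D : ℝ}
    (hD : ∀ t ∈ T, ∀ x : G, JoinedAbove χ S (χ x - D) x (x * t))
    (h : JoinedAbove χ T c x y) : JoinedAbove χ S (c - D) x y := by
  induction h with
  | refl => exact .refl
  | tail _ hab ih =>
    obtain ⟨ha, hb, t, ht, rfl | rfl⟩ := hab
    · exact ih.trans ((hD t ht _).mono_level (by linarith))
    · exact ih.trans ((hD t ht _).mono_level (by linarith)).symm

end JoinedAbove

theorem exists_joinedAbove_mul (hχ : IsChar χ) {S : Set G} {g : G} (hg : g ∈ closure S) :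
    ∃ D : ℝ, ∀ x : G, JoinedAbove χ S (χ x - D) x (x * g) := by
  induction hg using closure_induction with
  | mem s hs =>
    refine ⟨max 0 (-χ s), fun x => .single ⟨?_, ?_, s, hs, .inl rfl⟩⟩
    · linarith [le_max_left 0 (-χ s)]
    · rw [hχ]; linarith [le_max_right 0 (-χ s)]
  | one => exact ⟨0, fun x => by rw [mul_one]; exact .refl⟩
  | mul a b _ _ iha ihb =>
    obtain ⟨Da, ha⟩ := iha
    obtain ⟨Db, hb⟩ := ihb
    refine ⟨max Da (Db - χ a), fun x => ?_⟩
    have hxb := hb (x * a)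
    rw [hχ] at hxb
    rw [← mul_assoc]
    exact ((ha x).mono_level (by linarith [le_max_left Da (Db - χ a)])).trans
      (hxb.mono_level (by linarith [le_max_right Da (Db - χ a)]))
  | inv a _ iha =>
    obtain ⟨Da, ha⟩ := iha
    refine ⟨Da + χ a, fun x => ?_⟩
    have h := ha (x * a⁻¹)
    rw [inv_mul_cancel_right, hχ, hχ.map_inv] at h
    exact h.symm.mono_level (by linarith)

theorem exists_forall_joinedAbove_mul (hχ : IsChar χ) {S T : Set G} (hS : closure S = ⊤)
    (hT : T.Finite) : ∃ D : ℝ, ∀ t ∈ T, ∀ x : G, JoinedAbove χ S (χ x - D) x (x * t) := by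
  choose D hD using fun g => exists_joinedAbove_mul hχ (hS ▸ mem_top g : g ∈ closure S)
  obtain ⟨M, hM⟩ := (hT.image D).bddAbove
  exact ⟨M, fun t ht x => (hD t x).mono_level (by linarith [hM ⟨t, ht, rfl⟩])⟩

theorem joinedAbove_mul_pow (hχ : IsChar χ) {S : Set G} {u : G}
    (hu : u ∈ S ∨ u⁻¹ ∈ S) (hu0 : 0 ≤ χ u) (x : G) (n : ℕ) :
    JoinedAbove χ S (χ x) x (x * u ^ n) := by
  induction n with
  | zero => rw [pow_zero, mul_one]; exact .refl
  | succ n ih =>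
    have hle : χ x ≤ χ (x * u ^ n) := by
      rw [hχ, hχ.map_pow]; exact le_add_of_nonneg_right (mul_nonneg n.cast_nonneg hu0)
    rw [pow_succ, ← mul_assoc]
    refine ih.tail ⟨hle, by rw [hχ]; linarith, ?_⟩
    rcases hu with hu | hu
    exacts [⟨u, hu, .inl rfl⟩, ⟨u⁻¹, hu, .inr (mul_inv_cancel_right _ _).symm⟩]

theorem exists_joinedAbove_le (hχ : IsChar χ) (hχ0 : χ ≠ fun _ => 0) {S : Set G}
    (hS : closure S = ⊤) (x : G) (R : ℝ) : ∃ y, R ≤ χ y ∧ JoinedAbove χ S (χ x) x y := by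
  obtain ⟨s, hs, hs0⟩ := hχ.exists_mem_ne_zero hS hχ0
  obtain ⟨u, hu, hu0⟩ : ∃ u, (u ∈ S ∨ u⁻¹ ∈ S) ∧ 0 < χ u := by
    rcases hs0.lt_or_gt with hneg | hpos
    · exact ⟨s⁻¹, .inr (by rwa [inv_inv]), by rw [hχ.map_inv]; linarith⟩
    · exact ⟨s, .inl hs, hpos⟩
  obtain ⟨n, hn⟩ := hχ.exists_pow_ge hu0 (R - χ x)
  exact ⟨x * u ^ n, by rw [hχ]; linarith, joinedAbove_mul_pow hχ hu hu0.le x n⟩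

theorem joinedAbove_min (hχ : IsChar χ) {T : Set G}
    (hconn : ∀ g, 0 ≤ χ g → JoinedAbove χ T 0 1 g) (x y : G) :
    JoinedAbove χ T (min (χ x) (χ y)) x y := by
  wlog hxy : χ x ≤ χ y generalizing x y
  · rw [min_comm]; exact (this y x (le_of_not_ge hxy)).symm
  have h := (hconn (x⁻¹ * y) (by rw [hχ, hχ.map_inv]; linarith)).mul_left hχ x
  rwa [mul_one, mul_inv_cancel_left, add_zero, ← min_eq_left hxy] at h

theorem inSigma1_of_joinedAbove_one (hχ : IsChar χ) (hχ0 : χ ≠ fun _ => 0) {T : Set G}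
    (hT : T.Finite) (hconn : ∀ g, 0 ≤ χ g → JoinedAbove χ T 0 1 g) : InSigma1 χ := by
  refine inSigma1_iff.2 ⟨hχ, hχ0, fun S hS x y hx hy => ?_⟩
  obtain ⟨D, hD⟩ := exists_forall_joinedAbove_mul hχ hS hT
  obtain ⟨x', hx', hxx'⟩ := exists_joinedAbove_le hχ hχ0 hS x D
  obtain ⟨y', hy', hyy'⟩ := exists_joinedAbove_le hχ hχ0 hS y D
  have hx'y' : JoinedAbove χ S 0 x' y' :=
    ((joinedAbove_min hχ hconn x' y').of_forall_joinedAbove_mul hD).mono_level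
      (by linarith [le_min hx' hy'])
  exact (hxx'.mono_level hx).trans (hx'y'.trans (hyy'.mono_level hy).symm)

theorem joinedAbove_one_of_mem_range (f : H →* G) (hf : InSigma1 (χ ∘ f)) {S : Finset H}
    (hS : closure (S : Set H) = ⊤) {T : Set G} (hST : f '' S ⊆ T) {g : G} (hg : g ∈ f.range)
    (hg0 : 0 ≤ χ g) : JoinedAbove χ T 0 1 g := by
  obtain ⟨p, rfl⟩ := hg
  have h := (inSigma1_iff.1 hf).2.2 S hS 1 p hf.1.map_one.ge hg0
  simpa using (h.map f).mono_set hST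

/-- The walk from `g * a * zᵐ` to `g * zᵐ'`, for `m'` large, stays in the coset `g * a * K`. -/
theorem joinedAbove_mul_mul_pow (hχ : IsChar χ) {T : Set G} {K : Subgroup G}
    (hK : ∀ h ∈ K, 0 ≤ χ h → JoinedAbove χ T 0 1 h) {z : G} (hzK : z ∈ K) (hz : 0 < χ z)
    {g a : G} (ha : a ∈ K) (hg : ∀ m : ℕ, 0 ≤ χ (g * z ^ m) → JoinedAbove χ T 0 1 (g * z ^ m))
    (m : ℕ) (hm : 0 ≤ χ (g * a * z ^ m)) : JoinedAbove χ T 0 1 (g * a * z ^ m) := by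
  obtain ⟨m', hm'⟩ := hχ.exists_pow_ge hz (χ (g * a * z ^ m) - χ g)
  have hχx : χ (g * a * z ^ m) = χ g + χ a + χ (z ^ m) := by rw [hχ, hχ]
  have hmem : (a * z ^ m)⁻¹ * z ^ m' ∈ K :=
    K.mul_mem (K.inv_mem (K.mul_mem ha (K.pow_mem hzK m))) (K.pow_mem hzK m')
  have hcoset : JoinedAbove χ T 0 (g * a * z ^ m) (g * z ^ m') := by
    have h := (hK _ hmem (by rw [hχ, hχ.map_inv, hχ]; linarith)).mul_left hχ (g * a * z ^ m)
    rw [mul_one, add_zero] at h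
    convert h.mono_level hm using 1
    group
  exact (hg m' (by rw [hχ]; linarith)).trans hcoset.symm

theorem joinedAbove_one_of_sup_eq_top (hχ : IsChar χ) {T : Set G} {H₁ H₂ : Subgroup G}
    (hsup : H₁ ⊔ H₂ = ⊤) {z : G} (hz₁ : z ∈ H₁) (hz₂ : z ∈ H₂) (hz : 0 < χ z)
    (hH₁ : ∀ h ∈ H₁, 0 ≤ χ h → JoinedAbove χ T 0 1 h)
    (hH₂ : ∀ h ∈ H₂, 0 ≤ χ h → JoinedAbove χ T 0 1 h) {g : G} (hg : 0 ≤ χ g) :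
    JoinedAbove χ T 0 1 g := by
  have key : ∀ g ∈ closure ((H₁ : Set G) ∪ H₂), ∀ m : ℕ, 0 ≤ χ (g * z ^ m) →
      JoinedAbove χ T 0 1 (g * z ^ m) := by
    intro g hg
    induction hg using closure_induction_right with
    | one => intro m hm; rw [one_mul] at hm ⊢; exact hH₁ _ (H₁.pow_mem hz₁ m) hm
    | mul_right g _ a ha ih =>
      rcases ha with ha | ha
      exacts [joinedAbove_mul_mul_pow hχ hH₁ hz₁ hz ha ih,
        joinedAbove_mul_mul_pow hχ hH₂ hz₂ hz ha ih]
    | mul_inv_cancel g _ a ha ih =>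
      rcases ha with ha | ha
      exacts [joinedAbove_mul_mul_pow hχ hH₁ hz₁ hz (H₁.inv_mem ha) ih,
        joinedAbove_mul_mul_pow hχ hH₂ hz₂ hz (H₂.inv_mem ha) ih]
  simpa using key g (by rw [← sup_eq_closure, hsup]; trivial) 0 (by simpa using hg)

end Sigma1

theorem amalInl_apply_eq_amalInr_apply {K P₁ P₂ : Type*} [Group K] [Group P₁] [Group P₂]
    (j₁ : K →* P₁) (j₂ : K →* P₂) (k : K) :
    amalInl j₁ j₂ (j₁ k) = amalInr j₁ j₂ (j₂ k) :=
  QuotientGroup.eq_iff_div_mem.2 (subset_normalClosure ⟨k, div_eq_mul_inv _ _⟩)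

theorem range_amalInl_sup_range_amalInr {K P₁ P₂ : Type*} [Group K] [Group P₁] [Group P₂]
    (j₁ : K →* P₁) (j₂ : K →* P₂) : (amalInl j₁ j₂).range ⊔ (amalInr j₁ j₂).range = ⊤ := by
  let π : Monoid.Coprod P₁ P₂ →* Amal j₁ j₂ := QuotientGroup.mk' _
  change (π.comp Monoid.Coprod.inl).range ⊔ (π.comp Monoid.Coprod.inr).range = ⊤
  rw [MonoidHom.range_comp, MonoidHom.range_comp, ← Subgroup.map_sup,
    Monoid.Coprod.range_inl_sup_range_inr, map_top_of_surjective π (QuotientGroup.mk'_surjective _)]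

open Sigma1 in
theorem stmt15_general {K P₁ P₂ : Type*} [Group K] [Group P₁] [Group P₂]
    (h1 : Group.FG P₁) (h2 : Group.FG P₂)
    (j₁ : K →* P₁) (j₂ : K →* P₂)
    (χ : Amal j₁ j₂ → ℝ) (hχ : IsChar χ)
    (hχ1 : InSigma1 (χ ∘ amalInl j₁ j₂))
    (hχ2 : InSigma1 (χ ∘ amalInr j₁ j₂))
    (hχK : ∃ k : K, χ (amalInl j₁ j₂ (j₁ k)) ≠ 0) :
    InSigma1 χ := by
  obtain ⟨S₁, hS₁⟩ := h1.out
  obtain ⟨S₂, hS₂⟩ := h2.out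
  obtain ⟨k, hk⟩ := hχK
  obtain ⟨z, ⟨hz₁, hz₂⟩, hz⟩ :=
    hχ.exists_mem_pos (H := (amalInl j₁ j₂).range ⊓ (amalInr j₁ j₂).range)
      ⟨_, ⟨⟨_, rfl⟩, ⟨_, (amalInl_apply_eq_amalInr_apply j₁ j₂ k).symm⟩⟩, hk⟩
  let T := amalInl j₁ j₂ '' S₁ ∪ amalInr j₁ j₂ '' S₂
  have hT : T.Finite := (S₁.finite_toSet.image _).union (S₂.finite_toSet.image _)
  refine inSigma1_of_joinedAbove_one hχ (fun h => hz.ne' (congrFun h z)) hT fun g hg => ?_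
  exact joinedAbove_one_of_sup_eq_top hχ (range_amalInl_sup_range_amalInr j₁ j₂) hz₁ hz₂ hz
    (fun _ => joinedAbove_one_of_mem_range _ hχ1 hS₁ Set.subset_union_left)
    (fun _ => joinedAbove_one_of_mem_range _ hχ2 hS₂ Set.subset_union_right) hg

/-- for an amalgam `Π = Π₁ *_K Π₂` of finitely generated groups over a
finitely generated subgroup `K`, a character `χ` of `Π` with `[χ|_{Π₁}] ∈ Σ¹(Π₁)`,
`[χ|_{Π₂}] ∈ Σ¹(Π₂)` and `χ|_K ≠ 0` satisfies `[χ] ∈ Σ¹(Π)`. -/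
theorem stmt15 {K P₁ P₂ : Type*} [Group K] [Group P₁] [Group P₂]
    (hK : Group.FG K) (h1 : Group.FG P₁) (h2 : Group.FG P₂)
    (j₁ : K →* P₁) (j₂ : K →* P₂)
    (hj₁ : Function.Injective j₁) (hj₂ : Function.Injective j₂)
    (χ : Amal j₁ j₂ → ℝ) (hχ : IsChar χ)
    (hχ1 : InSigma1 (χ ∘ amalInl j₁ j₂))
    (hχ2 : InSigma1 (χ ∘ amalInr j₁ j₂))
    (hχK : ∃ k : K, χ (amalInl j₁ j₂ (j₁ k)) ≠ 0) :
    InSigma1 χ :=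
  stmt15_general h1 h2 j₁ j₂ χ hχ hχ1 hχ2 hχK
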